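/- Assume P_{1i} > 0 for i = 2,…,d. Let q^{(σ)} be a family of sampling probabilities and let q̃_k (k ∈ ℕ) be a family of asymptotic-expansion coefficients for q^{(σ)}. Then for every m ∈ ℕ^d ∖ {0} the following limits hold as σ → ∞: (i) if m_1 ≥ 1, then q^{(σ)}(m − e_1)/q^{(σ)}(m) → 1; (ii) for every i = 2,…,d with m_i ≥ 1, σ^{-1} q^{(σ)}(m − e_i)/q^{(σ)}(m) → 1/(m_i − 1 + θP_{1i}); (iii) for every i = 2,…,d, σ q^{(σ)}(m + e_i)/q^{(σ)}(m) → m_i + θP_{1i}. (These are the leading-order asymptotics of the ratios of sampling probabilities governing the jump rates of the reduced conditional ancestral selection graph under strong selection.) -/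

import Mathlib

open Finset Filter Asymptotics

noncomputable section

/-- The `i`-th standard unit vector of `ℤ^d`. -/
def stdE {d : ℕ} (i : Fin d) : Fin d → ℤ := fun j => if j = i then 1 else 0

/-- The total size `‖n‖ = n_1 + ⋯ + n_d` of a configuration. -/
def tot {d : ℕ} (n : Fin d → ℤ) : ℤ := ∑ i, n i

/-- `n ∈ ℕ^d`, i.e. all components of `n : ℤ^d` are nonnegative. -/
def IsNatVec {d : ℕ} (n : Fin d → ℤ) : Prop := ∀ i, 0 ≤ n i

/-- A family of sampling probabilities `q^{(σ)} : ℤ^d → ℝ`, indexed by `σ > 0`: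
`q^{(σ)}(0) = 1`; `q^{(σ)}(n) = 0` if `n` has a negative component; the consistency
condition `∑_i q^{(σ)}(n+e_i) = q^{(σ)}(n)` holds on `ℕ^d`; and the sampling recursion
holds on `ℕ^d ∖ {0}`.  (Allele `1` is represented by the index `0 : Fin d`.) -/
def IsSamplingFamily {d : ℕ} [NeZero d] (θ : ℝ) (P : Fin d → Fin d → ℝ)
    (q : ℝ → (Fin d → ℤ) → ℝ) : Prop :=
  (∀ σ : ℝ, 0 < σ → q σ 0 = 1) ∧
  (∀ σ : ℝ, 0 < σ → ∀ n : Fin d → ℤ, (∃ i, n i < 0) → q σ n = 0) ∧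
  (∀ σ : ℝ, 0 < σ → ∀ n : Fin d → ℤ, IsNatVec n →
    ∑ i, q σ (n + stdE i) = q σ n) ∧
  (∀ σ : ℝ, 0 < σ → ∀ n : Fin d → ℤ, IsNatVec n → n ≠ 0 →
    ((tot n : ℝ) * ((tot n : ℝ) - 1 + θ) + ((tot n : ℝ) - (n 0 : ℝ)) * σ) * q σ n =
      (∑ i, (n i : ℝ) * ((n i : ℝ) - 1) * q σ (n - stdE i))
      + (∑ i, ∑ j, (n i : ℝ) * θ * P j i * q σ (n - stdE i + stdE j))
      + σ * (tot n : ℝ) * ∑ i ∈ univ.erase 0, q σ (n + stdE i))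

/-- A family of asymptotic-expansion coefficients `q̃_k : ℤ^d → ℝ` for a family of
sampling probabilities `q^{(σ)}`:  `q̃_0(0) = 1`, `q̃_k(0) = 0` for `k ≥ 1`,
`q̃_k(n) = 0` if `n` has a negative component, and for every `n ∈ ℕ^d` and `K ∈ ℕ`,
`σ^{‖n‖-n_1} q^{(σ)}(n) - ∑_{k=0}^K q̃_k(n) σ^{-k} = O(σ^{-(K+1)})` as `σ → ∞`. -/
def IsExpansionCoeffs {d : ℕ} [NeZero d] (q : ℝ → (Fin d → ℤ) → ℝ)
    (qt : ℕ → (Fin d → ℤ) → ℝ) : Prop :=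
  qt 0 0 = 1 ∧
  (∀ k : ℕ, 1 ≤ k → qt k 0 = 0) ∧
  (∀ k : ℕ, ∀ n : Fin d → ℤ, (∃ i, n i < 0) → qt k n = 0) ∧
  (∀ n : Fin d → ℤ, IsNatVec n → ∀ K : ℕ,
    (fun σ : ℝ => σ ^ (tot n - n 0) * q σ n
        - ∑ k ∈ range (K + 1), qt k n * σ ^ (-(k : ℤ)))
      =O[atTop] fun σ : ℝ => σ ^ (-(K + 1 : ℤ)))

/-!
Write `s(n) = ‖n‖ - n₁` for the number of unfit lineages. Taking `K = 0` in the expansion gives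
`σ^{s(n)} q^{(σ)}(n) → q̃₀(n)`, so `σ^a q^{(σ)}(n) → 0` for `a < s(n)`. Scaling the consistency
condition by `σ^{s(n)}` and the recursion by `σ^{s(n)-1}` and letting `σ → ∞` keeps only the terms
of the right order, which gives `q̃₀(n + e₁) = q̃₀(n)` and
`s(n) q̃₀(n) = ∑_{i ≥ 2} nᵢ (nᵢ - 1 + θ P₁ᵢ) q̃₀(n - eᵢ)`.
By induction on `‖n‖` these two identities force `q̃₀(n) = ∏_{i ≥ 2} (θ P₁ᵢ)^{(nᵢ)}` (rising
factorials), which is positive; each ratio in the theorem is then a quotient of two such products.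
-/

open Topology

def unfitCount {d : ℕ} [NeZero d] (n : Fin d → ℤ) : ℤ := tot n - n 0

/-- `∏_{i ≥ 2} (θ P₁ᵢ)^{(nᵢ)}` with rising factorials `x^{(k)} = x (x + 1) ⋯ (x + k - 1)`;
negative `nᵢ` are truncated to `0`. -/
def pochhammerProd {d : ℕ} [NeZero d] (θ : ℝ) (P : Fin d → Fin d → ℝ) (n : Fin d → ℤ) : ℝ :=
  ∏ i ∈ univ.erase 0, (ascPochhammer ℝ (n i).toNat).eval (θ * P 0 i)

section Configurations

variable {d : ℕ} {n : Fin d → ℤ}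

lemma tot_add_stdE (i : Fin d) : tot (n + stdE i) = tot n + 1 := by
  simp [tot, stdE, sum_add_distrib]

lemma tot_sub_stdE (i : Fin d) : tot (n - stdE i) = tot n - 1 := by
  simp [tot, stdE, sum_sub_distrib]

lemma IsNatVec.add_stdE (hn : IsNatVec n) (i : Fin d) : IsNatVec (n + stdE i) := fun j => by
  have := hn j
  simp only [Pi.add_apply, stdE]
  split_ifs <;> omega

lemma IsNatVec.sub_stdE {i : Fin d} (hn : IsNatVec n) (hi : 1 ≤ n i) : IsNatVec (n - stdE i) :=
  fun j => by
  have := hn j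
  simp only [Pi.sub_apply, stdE]
  split_ifs with h
  · subst h; omega
  · omega

lemma IsNatVec.tot_nonneg (hn : IsNatVec n) : 0 ≤ tot n := sum_nonneg fun i _ => hn i

variable [NeZero d]

lemma unfitCount_add_stdE (i : Fin d) :
    unfitCount (n + stdE i) = unfitCount n + if i = 0 then 0 else 1 := by
  simp only [unfitCount, tot_add_stdE, Pi.add_apply, stdE, eq_comm (a := (0 : Fin d))]
  split_ifs <;> omega

lemma unfitCount_sub_stdE (i : Fin d) :
    unfitCount (n - stdE i) = unfitCount n - if i = 0 then 0 else 1 := by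
  simp only [unfitCount, tot_sub_stdE, Pi.sub_apply, stdE, eq_comm (a := (0 : Fin d))]
  split_ifs <;> omega

lemma unfitCount_eq_sum : unfitCount n = ∑ i ∈ univ.erase 0, n i := by
  rw [unfitCount, tot, ← add_sum_erase univ n (mem_univ 0)]
  ring

lemma IsNatVec.unfitCount_nonneg (hn : IsNatVec n) : 0 ≤ unfitCount n := by
  rw [unfitCount_eq_sum]
  exact sum_nonneg fun i _ => hn i

end Configurations

lemma Filter.Tendsto.zpow_mul_div {f g : ℝ → ℝ} {a b : ℤ} {x y : ℝ}
    (hf : Tendsto (fun σ => σ ^ a * f σ) atTop (𝓝 x))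
    (hg : Tendsto (fun σ => σ ^ b * g σ) atTop (𝓝 y)) (hy : y ≠ 0) :
    Tendsto (fun σ => σ ^ (a - b) * f σ / g σ) atTop (𝓝 (x / y)) := by
  refine (hf.div hg hy).congr' ?_
  filter_upwards [eventually_gt_atTop 0] with σ hσ
  rw [Pi.div_apply, mul_div_mul_comm, ← zpow_sub₀ hσ.ne', ← mul_div_assoc]

section Pochhammer

variable {d : ℕ} [NeZero d] {θ : ℝ} {P : Fin d → Fin d → ℝ}

lemma pochhammerProd_pos (hpos : ∀ i, i ≠ 0 → 0 < θ * P 0 i) (n : Fin d → ℤ) :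
    0 < pochhammerProd θ P n :=
  prod_pos fun i hi => ascPochhammer_pos _ _ (hpos i (ne_of_mem_erase hi))

lemma pochhammerProd_zero : pochhammerProd θ P 0 = 1 := by
  simp [pochhammerProd]

lemma pochhammerProd_sub_stdE_zero (n : Fin d → ℤ) :
    pochhammerProd θ P (n - stdE 0) = pochhammerProd θ P n :=
  prod_congr rfl fun i hi => by simp [stdE, ne_of_mem_erase hi]

lemma pochhammerProd_add_stdE {n : Fin d → ℤ} {i : Fin d} (hi : i ≠ 0) (hni : 0 ≤ n i) :
    pochhammerProd θ P (n + stdE i) = pochhammerProd θ P n * (n i + θ * P 0 i) := by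
  have hmem : i ∈ univ.erase 0 := mem_erase.2 ⟨hi, mem_univ i⟩
  have hrest : ∀ j ∈ (univ.erase 0).erase i, (n + stdE i) j = n j := fun j hj => by
    simp [stdE, ne_of_mem_erase hj]
  have hsucc : ((n + stdE i) i).toNat = (n i).toNat + 1 := by simp [stdE]; omega
  have hcast : ((n i).toNat : ℝ) = n i := by exact_mod_cast Int.toNat_of_nonneg hni
  rw [pochhammerProd, pochhammerProd, ← mul_prod_erase _ _ hmem, ← mul_prod_erase _ _ hmem,
    prod_congr rfl fun j hj => by rw [hrest j hj], hsucc, ascPochhammer_succ_eval, hcast]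
  ring

lemma pochhammerProd_sub_stdE {n : Fin d → ℤ} {i : Fin d} (hi : i ≠ 0) (hni : 1 ≤ n i) :
    pochhammerProd θ P (n - stdE i) * (n i - 1 + θ * P 0 i) = pochhammerProd θ P n := by
  have h := pochhammerProd_add_stdE (θ := θ) (P := P) (n := n - stdE i) hi (by simp [stdE]; omega)
  rw [sub_add_cancel] at h
  simp [h, stdE]

end Pochhammer

section Limits

variable {d : ℕ} [NeZero d] {θ : ℝ} {P : Fin d → Fin d → ℝ} {q : ℝ → (Fin d → ℤ) → ℝ}
  {qt : ℕ → (Fin d → ℤ) → ℝ}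

lemma tendsto_zpow_unfitCount_mul (hq : IsSamplingFamily θ P q) (hqt : IsExpansionCoeffs q qt)
    (n : Fin d → ℤ) :
    Tendsto (fun σ => σ ^ unfitCount n * q σ n) atTop (𝓝 (qt 0 n)) := by
  by_cases hn : IsNatVec n
  · have h := hqt.2.2.2 n hn 0
    simp only [zero_add, range_one, sum_singleton, Nat.cast_zero, neg_zero, zpow_zero,
      mul_one] at h
    simpa [unfitCount] using
      (h.trans_tendsto (tendsto_zpow_atTop_zero (by norm_num))).add_const (qt 0 n)
  · simp only [IsNatVec, not_forall, not_le] at hn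
    rw [hqt.2.2.1 0 n hn]
    refine tendsto_const_nhds.congr' ?_
    filter_upwards [eventually_gt_atTop 0] with σ hσ
    rw [hq.2.1 σ hσ n hn, mul_zero]

lemma tendsto_zpow_mul_of_lt_unfitCount (hq : IsSamplingFamily θ P q)
    (hqt : IsExpansionCoeffs q qt) {n : Fin d → ℤ} {a : ℤ} (ha : a < unfitCount n) :
    Tendsto (fun σ => σ ^ a * q σ n) atTop (𝓝 0) := by
  have h := (tendsto_zpow_atTop_zero (sub_neg.2 ha)).mul (tendsto_zpow_unfitCount_mul hq hqt n)
  rw [zero_mul] at h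
  refine h.congr' ?_
  filter_upwards [eventually_gt_atTop 0] with σ hσ
  rw [← mul_assoc, ← zpow_add₀ hσ.ne', sub_add_cancel]

lemma qt_zero_add_stdE_zero (hq : IsSamplingFamily θ P q) (hqt : IsExpansionCoeffs q qt)
    {n : Fin d → ℤ} (hn : IsNatVec n) : qt 0 (n + stdE 0) = qt 0 n := by
  have hcons : ∀ᶠ σ in atTop, σ ^ unfitCount n * q σ n
      - ∑ i ∈ univ.erase 0, σ ^ unfitCount n * q σ (n + stdE i)
        = σ ^ unfitCount (n + stdE 0) * q σ (n + stdE 0) := by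
    filter_upwards [eventually_gt_atTop 0] with σ hσ
    rw [← mul_sum, ← mul_sub, unfitCount_add_stdE, if_pos rfl, add_zero, ← hq.2.2.1 σ hσ n hn,
      ← add_sum_erase _ _ (mem_univ 0), add_sub_cancel_right]
  have hlim := (tendsto_zpow_unfitCount_mul hq hqt n).sub <|
    tendsto_finsetSum (univ.erase 0) fun i hi =>
      tendsto_zpow_mul_of_lt_unfitCount hq hqt (n := n + stdE i) (a := unfitCount n) <| by
        rw [unfitCount_add_stdE, if_neg (ne_of_mem_erase hi)]; omega
  rw [sum_const_zero, sub_zero] at hlim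
  exact tendsto_nhds_unique (tendsto_zpow_unfitCount_mul hq hqt _) (hlim.congr' hcons)

/-- Among the coalescence and mutation terms of the recursion at `n`, only `q(n - eᵢ)` and
`q(n - eᵢ + e₁)` with `i ≥ 2` are of order `σ^{1 - s(n)}`, and they agree at leading order. -/
lemma tendsto_coalescence_mutation_term (hq : IsSamplingFamily θ P q)
    (hqt : IsExpansionCoeffs q qt) {n : Fin d → ℤ} (hn : IsNatVec n) (i : Fin d) :
    Tendsto (fun σ => σ ^ (unfitCount n - 1) * ((n i : ℝ) * ((n i : ℝ) - 1) * q σ (n - stdE i)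
        + ∑ j, (n i : ℝ) * θ * P j i * q σ (n - stdE i + stdE j))) atTop
      (𝓝 (if i = 0 then 0 else (n i : ℝ) * ((n i : ℝ) - 1 + θ * P 0 i) * qt 0 (n - stdE i))) := by
  have hsplit : (fun σ => σ ^ (unfitCount n - 1) * ((n i : ℝ) * ((n i : ℝ) - 1) * q σ (n - stdE i)
        + ∑ j, (n i : ℝ) * θ * P j i * q σ (n - stdE i + stdE j))) =
      fun σ => (n i : ℝ) * ((n i : ℝ) - 1) * (σ ^ (unfitCount n - 1) * q σ (n - stdE i))
        + ∑ j, (n i : ℝ) * θ * P j i * (σ ^ (unfitCount n - 1) * q σ (n - stdE i + stdE j)) := by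
    funext σ
    rw [mul_add, mul_sum]
    congr 1
    · ring
    · exact sum_congr rfl fun j _ => by ring
  rw [hsplit]
  by_cases hi : i = 0
  · subst hi
    have hcoal := tendsto_zpow_mul_of_lt_unfitCount hq hqt (n := n - stdE 0)
      (a := unfitCount n - 1) (by rw [unfitCount_sub_stdE, if_pos rfl]; omega)
    have hmut := fun j => tendsto_zpow_mul_of_lt_unfitCount hq hqt (n := n - stdE 0 + stdE j)
      (a := unfitCount n - 1)
      (by rw [unfitCount_add_stdE, unfitCount_sub_stdE]; split_ifs <;> omega)
    simpa only [eq_self_iff_true, if_true, mul_zero, sum_const_zero, add_zero] using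
      (hcoal.const_mul _).add (tendsto_finsetSum univ fun j _ => (hmut j).const_mul _)
  rcases (hn i).eq_or_lt with hni | hni
  · simp [← hni]
  have hcoal := tendsto_zpow_unfitCount_mul hq hqt (n - stdE i)
  rw [unfitCount_sub_stdE, if_neg hi] at hcoal
  have hmut : ∀ j, Tendsto (fun σ => σ ^ (unfitCount n - 1) * q σ (n - stdE i + stdE j)) atTop
      (𝓝 (if j = 0 then qt 0 (n - stdE i) else 0)) := fun j => by
    by_cases hj : j = 0
    · subst hj
      rw [if_pos rfl, ← qt_zero_add_stdE_zero hq hqt (hn.sub_stdE hni)]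
      have h := tendsto_zpow_unfitCount_mul hq hqt (n - stdE i + stdE 0)
      rwa [unfitCount_add_stdE, unfitCount_sub_stdE, if_pos rfl, if_neg hi, add_zero] at h
    · rw [if_neg hj]
      exact tendsto_zpow_mul_of_lt_unfitCount hq hqt
        (by rw [unfitCount_add_stdE, unfitCount_sub_stdE, if_neg hi, if_neg hj]; omega)
  convert (hcoal.const_mul ((n i : ℝ) * ((n i : ℝ) - 1))).add (tendsto_finsetSum univ
    fun j _ => (hmut j).const_mul ((n i : ℝ) * θ * P j i)) using 2
  simp only [if_neg hi, mul_ite, mul_zero, sum_ite_eq', mem_univ, if_true]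
  ring

lemma tendsto_recursion_lhs (hq : IsSamplingFamily θ P q) (hqt : IsExpansionCoeffs q qt)
    (n : Fin d → ℤ) :
    Tendsto (fun σ => σ ^ (unfitCount n - 1) *
      (((tot n : ℝ) * ((tot n : ℝ) - 1 + θ) + ((tot n : ℝ) - (n 0 : ℝ)) * σ) * q σ n))
      atTop (𝓝 (unfitCount n * qt 0 n)) := by
  have h := ((tendsto_zpow_mul_of_lt_unfitCount hq hqt (sub_one_lt (unfitCount n))).const_mul
    ((tot n : ℝ) * ((tot n : ℝ) - 1 + θ))).add
    ((tendsto_zpow_unfitCount_mul hq hqt n).const_mul (unfitCount n : ℝ))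
  rw [mul_zero, zero_add] at h
  refine h.congr' ?_
  filter_upwards [eventually_gt_atTop 0] with σ hσ
  rw [show σ ^ unfitCount n = σ ^ (unfitCount n - 1) * σ by
    rw [← zpow_add_one₀ hσ.ne', sub_add_cancel]]
  push_cast [unfitCount]
  ring

lemma unfitCount_mul_qt_zero (hq : IsSamplingFamily θ P q) (hqt : IsExpansionCoeffs q qt)
    {n : Fin d → ℤ} (hn : IsNatVec n) (hn0 : n ≠ 0) :
    (unfitCount n : ℝ) * qt 0 n =
      ∑ i ∈ univ.erase 0, (n i : ℝ) * ((n i : ℝ) - 1 + θ * P 0 i) * qt 0 (n - stdE i) := by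
  have hrhs : Tendsto (fun σ => σ ^ (unfitCount n - 1) *
      ((∑ i, (n i : ℝ) * ((n i : ℝ) - 1) * q σ (n - stdE i))
        + (∑ i, ∑ j, (n i : ℝ) * θ * P j i * q σ (n - stdE i + stdE j))
        + σ * (tot n : ℝ) * ∑ i ∈ univ.erase 0, q σ (n + stdE i))) atTop
      (𝓝 (∑ i ∈ univ.erase 0, (n i : ℝ) * ((n i : ℝ) - 1 + θ * P 0 i) * qt 0 (n - stdE i))) := by
    have hsel := (tendsto_finsetSum (univ.erase 0) fun i hi =>
      tendsto_zpow_mul_of_lt_unfitCount hq hqt (n := n + stdE i) (a := unfitCount n) <| by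
        rw [unfitCount_add_stdE, if_neg (ne_of_mem_erase hi)]; omega).const_mul (tot n : ℝ)
    have h := (tendsto_finsetSum univ fun i _ =>
      tendsto_coalescence_mutation_term hq hqt hn i).add hsel
    rw [sum_const_zero, mul_zero, add_zero, sum_ite, sum_const_zero, zero_add, filter_not,
      filter_eq', if_pos (mem_univ 0), sdiff_singleton_eq_erase] at h
    refine h.congr' ?_
    filter_upwards [eventually_gt_atTop 0] with σ hσ
    rw [← sum_add_distrib, mul_add]
    congr 1
    · rw [mul_sum]
    · rw [show σ ^ unfitCount n = σ ^ (unfitCount n - 1) * σ by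
        rw [← zpow_add_one₀ hσ.ne', sub_add_cancel]]
      simp only [mul_sum]
      exact sum_congr rfl fun _ _ => by ring
  refine tendsto_nhds_unique ((tendsto_recursion_lhs hq hqt n).congr' ?_) hrhs
  filter_upwards [eventually_gt_atTop 0] with σ hσ
  rw [hq.2.2.2 σ hσ n hn hn0]

end Limits

theorem qt_zero_eq_pochhammerProd {d : ℕ} [NeZero d] {θ : ℝ} {P : Fin d → Fin d → ℝ}
    {q : ℝ → (Fin d → ℤ) → ℝ} {qt : ℕ → (Fin d → ℤ) → ℝ} (hq : IsSamplingFamily θ P q)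
    (hqt : IsExpansionCoeffs q qt) {n : Fin d → ℤ} (hn : IsNatVec n) :
    qt 0 n = pochhammerProd θ P n := by
  obtain ⟨k, hk⟩ : ∃ k : ℕ, tot n = k := ⟨(tot n).toNat, (Int.toNat_of_nonneg hn.tot_nonneg).symm⟩
  induction k generalizing n with
  | zero =>
    obtain rfl : n = 0 := funext fun i =>
      (sum_eq_zero_iff_of_nonneg fun j _ => hn j).1 (by exact_mod_cast hk) i (mem_univ i)
    rw [hqt.1, pochhammerProd_zero]
  | succ k ih =>
    rcases hn.unfitCount_nonneg.eq_or_lt with hu | hu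
    · have h0 : 1 ≤ n 0 := by unfold unfitCount at hu; omega
      have hsub := hn.sub_stdE h0
      calc qt 0 n = qt 0 (n - stdE 0 + stdE 0) := by rw [sub_add_cancel]
        _ = pochhammerProd θ P n := by
          rw [qt_zero_add_stdE_zero hq hqt hsub,
            ih hsub (by rw [tot_sub_stdE, hk]; push_cast; ring), pochhammerProd_sub_stdE_zero]
    · have hn0 : n ≠ 0 := by rintro rfl; simp [unfitCount, tot] at hu
      have hterm : ∀ i ∈ univ.erase 0, (n i : ℝ) * ((n i : ℝ) - 1 + θ * P 0 i) * qt 0 (n - stdE i)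
          = (n i : ℝ) * pochhammerProd θ P n := fun i hi => by
        rcases (hn i).eq_or_lt with hni | hni
        · simp [← hni]
        rw [ih (hn.sub_stdE hni) (by rw [tot_sub_stdE, hk]; push_cast; ring),
          ← pochhammerProd_sub_stdE (ne_of_mem_erase hi) hni]
        ring
      refine mul_left_cancel₀ (by exact_mod_cast hu.ne' : (unfitCount n : ℝ) ≠ 0) ?_
      rw [unfitCount_mul_qt_zero hq hqt hn hn0, sum_congr rfl hterm, ← sum_mul, unfitCount_eq_sum]
      push_cast
      rfl

theorem ratio_asymptotics_general {d : ℕ} (θ : ℝ) (hθ : 0 < θ)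
    (P : Fin (d + 2) → Fin (d + 2) → ℝ)
    (hP1pos : ∀ i : Fin (d + 2), i ≠ 0 → 0 < P 0 i)
    (q : ℝ → (Fin (d + 2) → ℤ) → ℝ) (qt : ℕ → (Fin (d + 2) → ℤ) → ℝ)
    (hq : IsSamplingFamily θ P q) (hqt : IsExpansionCoeffs q qt)
    (m : Fin (d + 2) → ℤ) (hm : IsNatVec m) :
    (1 ≤ m 0 →
      Tendsto (fun σ : ℝ => q σ (m - stdE 0) / q σ m) atTop (nhds 1)) ∧
    (∀ i : Fin (d + 2), i ≠ 0 → 1 ≤ m i →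
      Tendsto (fun σ : ℝ => σ⁻¹ * q σ (m - stdE i) / q σ m) atTop
        (nhds (1 / ((m i : ℝ) - 1 + θ * P 0 i)))) ∧
    (∀ i : Fin (d + 2), i ≠ 0 →
      Tendsto (fun σ : ℝ => σ * q σ (m + stdE i) / q σ m) atTop
        (nhds ((m i : ℝ) + θ * P 0 i))) := by
  have hlim : ∀ n, IsNatVec n →
      Tendsto (fun σ => σ ^ unfitCount n * q σ n) atTop (𝓝 (pochhammerProd θ P n)) :=
    fun n hn => qt_zero_eq_pochhammerProd hq hqt hn ▸ tendsto_zpow_unfitCount_mul hq hqt n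
  have hpos : ∀ n, 0 < pochhammerProd θ P n :=
    pochhammerProd_pos fun i hi => mul_pos hθ (hP1pos i hi)
  refine ⟨fun h0 => ?_, fun i hi hmi => ?_, fun i hi => ?_⟩
  · have h := (hlim _ (hm.sub_stdE h0)).zpow_mul_div (hlim m hm) (hpos m).ne'
    rw [unfitCount_sub_stdE, if_pos rfl, sub_zero, sub_self, pochhammerProd_sub_stdE_zero,
      div_self (hpos m).ne'] at h
    simpa only [zpow_zero, one_mul] using h
  · have h := (hlim _ (hm.sub_stdE hmi)).zpow_mul_div (hlim m hm) (hpos m).ne'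
    rw [unfitCount_sub_stdE, if_neg hi, sub_sub_cancel_left, ← pochhammerProd_sub_stdE hi hmi,
      div_mul_cancel_left₀ (hpos _).ne', ← one_div] at h
    simpa only [zpow_neg_one] using h
  · have h := (hlim _ (hm.add_stdE i)).zpow_mul_div (hlim m hm) (hpos m).ne'
    rw [unfitCount_add_stdE, if_neg hi, add_sub_cancel_left, pochhammerProd_add_stdE hi (hm i),
      mul_div_cancel_left₀ _ (hpos m).ne'] at h
    simpa only [zpow_one] using h

/-- **Leading-order asymptotics of ratios of sampling probabilities** (rates of the
reduced conditional ASG under strong selection): assuming `P_{1i} > 0` for `i = 2,…,d`,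
for every `m ∈ ℕ^d ∖ {0}`, as `σ → ∞`:
(i) if `m_1 ≥ 1` then `q^{(σ)}(m-e_1)/q^{(σ)}(m) → 1`;
(ii) for `i = 2,…,d` with `m_i ≥ 1`,
`σ^{-1} q^{(σ)}(m-e_i)/q^{(σ)}(m) → 1/(m_i-1+θP_{1i})`;
(iii) for `i = 2,…,d`, `σ q^{(σ)}(m+e_i)/q^{(σ)}(m) → m_i+θP_{1i}`. -/
theorem ratio_asymptotics {d : ℕ} (θ : ℝ) (hθ : 0 < θ)
    (P : Fin (d + 2) → Fin (d + 2) → ℝ)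
    (hPnonneg : ∀ i j, 0 ≤ P i j) (hProw : ∀ i, ∑ j, P i j = 1)
    (hP1pos : ∀ i : Fin (d + 2), i ≠ 0 → 0 < P 0 i)
    (q : ℝ → (Fin (d + 2) → ℤ) → ℝ) (qt : ℕ → (Fin (d + 2) → ℤ) → ℝ)
    (hq : IsSamplingFamily θ P q) (hqt : IsExpansionCoeffs q qt)
    (m : Fin (d + 2) → ℤ) (hm : IsNatVec m) (hm0 : m ≠ 0) :
    (1 ≤ m 0 →
      Tendsto (fun σ : ℝ => q σ (m - stdE 0) / q σ m) atTop (nhds 1)) ∧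
    (∀ i : Fin (d + 2), i ≠ 0 → 1 ≤ m i →
      Tendsto (fun σ : ℝ => σ⁻¹ * q σ (m - stdE i) / q σ m) atTop
        (nhds (1 / ((m i : ℝ) - 1 + θ * P 0 i)))) ∧
    (∀ i : Fin (d + 2), i ≠ 0 →
      Tendsto (fun σ : ℝ => σ * q σ (m + stdE i) / q σ m) atTop
        (nhds ((m i : ℝ) + θ * P 0 i))) :=
  ratio_asymptotics_general θ hθ P hP1pos q qt hq hqt m hm
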